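/- For every complex number q with |q| < 1 (with values of q making any denominator factor 1 + q^j vanish excluded), ∑_{m≥1, n≥0} q^{2m+n} (q; q)_m (−q; q)_{m−1}^2 (−q^3; q^3)_{m+n−1} / [ (q^3; q^3)_m (−q; q)_{m+n−1} (−q; q)_{m+n}^2 ] = −(1/2)·(q; q)_∞ (−q^3; q^3)_∞ / [ (−q; q)_∞ (q^3; q^3)_∞ ] + (1/3)·(−q^3; q^3)_∞ / (−q; q)_∞^3 + 1/6. -/

import Mathlib

/-- Finite q-Pochhammer symbol `(a; q)_n = ∏_{j=0}^{n-1} (1 - a q^j)`. -/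
noncomputable def qPoch (q a : ℂ) (n : ℕ) : ℂ := ∏ j ∈ Finset.range n, (1 - a * q ^ j)

/-- Infinite q-Pochhammer symbol `(a; q)_∞ = ∏_{j=0}^{∞} (1 - a q^j)`. -/
noncomputable def qPochInf (q a : ℂ) : ℂ := ∏' j : ℕ, (1 - a * q ^ j)

/-!
Write `g n = (-x³; q³)ₙ / (-x; q)ₙ³` (`innerPotential`). With `y = x qⁿ` the step factor of `g` is
`(1 + y³) / (1 + y)³`, and `1 - (1 + y³) / (1 + y)³ = 3y / (1 + y)²`, so for `x = q` the summand at
`(m + 1, n)` is `c m * (g (m + n) - g (m + n + 1))` with `c = outerCoeff`. Summing over `n`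
telescopes to `c m * (g m - g ∞)`. Two more factor identities show that `c m * g m` and `c m` are
themselves differences of consecutive terms of `u / 6` and `-v / 3`, where
`u = (x; q)(-x³; q³) / ((-x; q)(x³; q³))` and `v = (-x; q)²(x; q) / (x³; q³)`, so the sum over `m`
telescopes to `W 0 - W ∞` with `W = u / 6 + g ∞ * v / 3` (`outerPotential`). The double sum
converges absolutely because `c` is bounded and `g n - g (n + 1) = O(|q|ⁿ)`.
-/

open Filter Topology

section QPochhammer

variable {q a : ℂ}

theorem qPoch_succ (q a : ℂ) (n : ℕ) : qPoch q a (n + 1) = qPoch q a n * (1 - a * q ^ n) :=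
  Finset.prod_range_succ _ _

theorem qPoch_zero (q a : ℂ) : qPoch q a 0 = 1 :=
  Finset.prod_range_zero _

theorem one_sub_mul_pow_ne_zero (hq : ‖q‖ ≤ 1) (ha : ‖a‖ < 1) (j : ℕ) : 1 - a * q ^ j ≠ 0 := by
  refine sub_ne_zero.2 fun h => ?_
  have : ‖a * q ^ j‖ < 1 := by
    rw [norm_mul, norm_pow]
    exact (mul_le_of_le_one_right (norm_nonneg a) (pow_le_one₀ (norm_nonneg q) hq)).trans_lt ha
  simp [← h] at this

theorem qPoch_ne_zero (hq : ‖q‖ ≤ 1) (ha : ‖a‖ < 1) (n : ℕ) : qPoch q a n ≠ 0 :=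
  Finset.prod_ne_zero_iff.2 fun j _ => one_sub_mul_pow_ne_zero hq ha j

theorem summable_norm_neg_mul_pow (hq : ‖q‖ < 1) (a : ℂ) :
    Summable fun j : ℕ => ‖-(a * q ^ j)‖ := by
  simpa [norm_mul, norm_pow] using (summable_geometric_of_lt_one (norm_nonneg q) hq).mul_left ‖a‖

theorem multipliable_one_sub_mul_pow (hq : ‖q‖ < 1) (a : ℂ) :
    Multipliable fun j : ℕ => 1 - a * q ^ j := by
  simpa [← sub_eq_add_neg] using multipliable_one_add_of_summable (summable_norm_neg_mul_pow hq a)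

theorem tendsto_qPoch (hq : ‖q‖ < 1) (a : ℂ) : Tendsto (qPoch q a) atTop (𝓝 (qPochInf q a)) :=
  (multipliable_one_sub_mul_pow hq a).hasProd.tendsto_prod_nat

theorem qPochInf_ne_zero (hq : ‖q‖ < 1) (ha : ‖a‖ < 1) : qPochInf q a ≠ 0 := by
  simpa [qPochInf, ← sub_eq_add_neg] using tprod_one_add_ne_zero_of_summable
    (fun j => by simpa [← sub_eq_add_neg] using one_sub_mul_pow_ne_zero hq.le ha j)
    (summable_norm_neg_mul_pow hq a)

end QPochhammer

section Telescoping

variable {R : Type*} [NormedRing R] [CompleteSpace R]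

theorem hasSum_sub_succ_of_tendsto {G : Type*} [TopologicalSpace G] [AddCommGroup G]
    [IsTopologicalAddGroup G] [T2Space G] {f : ℕ → G} {L : G}
    (hs : Summable fun n => f n - f (n + 1)) (hf : Tendsto f atTop (𝓝 L)) :
    HasSum (fun n => f n - f (n + 1)) (f 0 - L) := by
  rw [hs.hasSum_iff_tendsto_nat]
  simp_rw [Finset.sum_range_sub']
  exact tendsto_const_nhds.sub hf

theorem summable_mul_comp_add_of_norm_le {c d : ℕ → R} {C D r : ℝ} (hr₀ : 0 ≤ r) (hr : r < 1)
    (hc : ∀ m, ‖c m‖ ≤ C) (hd : ∀ n, ‖d n‖ ≤ D * r ^ n) :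
    Summable fun p : ℕ × ℕ => c p.1 * d (p.1 + p.2) := by
  have hgeom := summable_geometric_of_lt_one hr₀ hr
  refine Summable.of_norm_bounded ((hgeom.mul_of_nonneg hgeom (fun n => pow_nonneg hr₀ n)
    (fun n => pow_nonneg hr₀ n)).mul_left (C * D)) fun p => ?_
  have hC : 0 ≤ C := (norm_nonneg _).trans (hc 0)
  calc ‖c p.1 * d (p.1 + p.2)‖ ≤ C * (D * r ^ (p.1 + p.2)) :=
        (norm_mul_le _ _).trans (mul_le_mul (hc _) (hd _) (norm_nonneg _) hC)
    _ = C * D * (r ^ p.1 * r ^ p.2) := by ring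

theorem hasSum_mul_comp_add_sub_succ {c g W : ℕ → R} {L M : R} {C D r : ℝ}
    (hr₀ : 0 ≤ r) (hr : r < 1) (hc : ∀ m, ‖c m‖ ≤ C) (hg : ∀ n, ‖g n - g (n + 1)‖ ≤ D * r ^ n)
    (hgL : Tendsto g atTop (𝓝 L)) (hW : Tendsto W atTop (𝓝 M))
    (hcW : ∀ m, c m * (g m - L) = W m - W (m + 1)) :
    HasSum (fun p : ℕ × ℕ => c p.1 * (g (p.1 + p.2) - g (p.1 + p.2 + 1))) (W 0 - M) := by
  have hs := summable_mul_comp_add_of_norm_le (d := fun n => g n - g (n + 1)) hr₀ hr hc hg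
  have hinner : ∀ m, HasSum (fun n => c m * (g (m + n) - g (m + n + 1))) (c m * (g m - L)) := by
    intro m
    have hsm : Summable fun n => c m * g (m + n) - c m * g (m + (n + 1)) := by
      simpa [mul_sub, add_assoc] using hs.prod_factor m
    have hshift : Tendsto (m + ·) atTop atTop := tendsto_atTop_mono (Nat.le_add_left · m) tendsto_id
    have := hasSum_sub_succ_of_tendsto hsm ((tendsto_const_nhds (x := c m)).mul (hgL.comp hshift))
    simpa [mul_sub, add_assoc] using this
  have houter := hs.hasSum.prod_fiberwise hinner
  have hW' := hasSum_sub_succ_of_tendsto (by simpa [hcW] using houter.summable) hW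
  simp only [← hcW] at hW'
  exact (hW'.unique houter) ▸ hs.hasSum

end Telescoping

section Potentials

variable (q x : ℂ)

noncomputable def innerPotential (n : ℕ) : ℂ :=
  qPoch (q ^ 3) (-x ^ 3) n / qPoch q (-x) n ^ 3

noncomputable def outerCoeff (m : ℕ) : ℂ :=
  x * q ^ m * qPoch q x (m + 1) * qPoch q (-x) m ^ 2 / (3 * qPoch (q ^ 3) (x ^ 3) (m + 1))

noncomputable def outerPotential (L : ℂ) (m : ℕ) : ℂ :=
  qPoch q x m * qPoch (q ^ 3) (-x ^ 3) m / (6 * qPoch q (-x) m * qPoch (q ^ 3) (x ^ 3) m) +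
    L * qPoch q (-x) m ^ 2 * qPoch q x m / (3 * qPoch (q ^ 3) (x ^ 3) m)

variable {q x}

theorem innerPotential_sub_succ {n : ℕ} (hQ : qPoch q (-x) (n + 1) ≠ 0) :
    innerPotential q x n - innerPotential q x (n + 1) =
      3 * (x * q ^ n) * qPoch (q ^ 3) (-x ^ 3) n / (qPoch q (-x) n * qPoch q (-x) (n + 1) ^ 2) := by
  rw [qPoch_succ, neg_mul, sub_neg_eq_add] at hQ
  obtain ⟨hQn, hf⟩ := mul_ne_zero_iff.1 hQ
  simp only [innerPotential, qPoch_succ, neg_mul, sub_neg_eq_add]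
  field_simp
  ring

theorem outerPotential_sub_succ (L : ℂ) {m : ℕ} (hQ : qPoch q (-x) (m + 1) ≠ 0)
    (hD : qPoch (q ^ 3) (x ^ 3) (m + 1) ≠ 0) :
    outerPotential q x L m - outerPotential q x L (m + 1) =
      outerCoeff q x m * (innerPotential q x m - L) := by
  rw [qPoch_succ, neg_mul, sub_neg_eq_add] at hQ
  rw [qPoch_succ] at hD
  obtain ⟨hQm, hf⟩ := mul_ne_zero_iff.1 hQ
  obtain ⟨hDm, hc⟩ := mul_ne_zero_iff.1 hD
  simp only [outerPotential, outerCoeff, innerPotential, qPoch_succ, neg_mul, sub_neg_eq_add]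
  field_simp
  ring

end Potentials

section Convergence

variable {q x : ℂ}

theorem norm_pow_three_lt_one {z : ℂ} (hz : ‖z‖ < 1) : ‖z ^ 3‖ < 1 := by
  rw [norm_pow]
  exact pow_lt_one₀ (norm_nonneg z) hz three_ne_zero

theorem tendsto_innerPotential (hq : ‖q‖ < 1) (hx : ‖x‖ < 1) :
    Tendsto (innerPotential q x) atTop
      (𝓝 (qPochInf (q ^ 3) (-x ^ 3) / qPochInf q (-x) ^ 3)) :=
  (tendsto_qPoch (norm_pow_three_lt_one hq) _).div ((tendsto_qPoch hq _).pow 3)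
    (pow_ne_zero _ (qPochInf_ne_zero hq (by rwa [norm_neg])))

theorem tendsto_outerPotential (hq : ‖q‖ < 1) (hx : ‖x‖ < 1) (L : ℂ) :
    Tendsto (outerPotential q x L) atTop
      (𝓝 (qPochInf q x * qPochInf (q ^ 3) (-x ^ 3) /
          (6 * qPochInf q (-x) * qPochInf (q ^ 3) (x ^ 3)) +
        L * qPochInf q (-x) ^ 2 * qPochInf q x / (3 * qPochInf (q ^ 3) (x ^ 3)))) := by
  have hq3 := norm_pow_three_lt_one hq
  have hQ : qPochInf q (-x) ≠ 0 := qPochInf_ne_zero hq (by rwa [norm_neg])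
  have hD : qPochInf (q ^ 3) (x ^ 3) ≠ 0 := qPochInf_ne_zero hq3 (norm_pow_three_lt_one hx)
  exact (((tendsto_qPoch hq x).mul (tendsto_qPoch hq3 _)).div
      ((tendsto_const_nhds.mul (tendsto_qPoch hq _)).mul (tendsto_qPoch hq3 _))
      (by simp [hQ, hD])).add
    (((tendsto_const_nhds.mul ((tendsto_qPoch hq _).pow 2)).mul (tendsto_qPoch hq x)).div
      (tendsto_const_nhds.mul (tendsto_qPoch hq3 _)) (by simp [hD]))

theorem exists_norm_outerCoeff_le (hq : ‖q‖ < 1) (hx : ‖x‖ < 1) :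
    ∃ C, ∀ m, ‖outerCoeff q x m‖ ≤ C := by
  have hq3 := norm_pow_three_lt_one hq
  have hD : qPochInf (q ^ 3) (x ^ 3) ≠ 0 := qPochInf_ne_zero hq3 (norm_pow_three_lt_one hx)
  have hshift := tendsto_add_atTop_nat 1
  have hlim : Tendsto (outerCoeff q x) atTop (𝓝 _) :=
    ((((tendsto_const_nhds.mul (tendsto_pow_atTop_nhds_zero_of_norm_lt_one hq)).mul
      ((tendsto_qPoch hq x).comp hshift)).mul ((tendsto_qPoch hq _).pow 2)).div
      (tendsto_const_nhds.mul ((tendsto_qPoch hq3 _).comp hshift)) (by simp [hD]))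
  exact Asymptotics.isBigO_one_nat_atTop_iff.1 (hlim.isBigO_one ℝ)

theorem exists_norm_innerPotential_sub_succ_le (hq : ‖q‖ < 1) (hx : ‖x‖ < 1) :
    ∃ D, ∀ n, ‖innerPotential q x n - innerPotential q x (n + 1)‖ ≤ D * ‖q‖ ^ n := by
  have hx' : ‖-x‖ < 1 := by rwa [norm_neg]
  have hQ : qPochInf q (-x) ≠ 0 := qPochInf_ne_zero hq hx'
  have hlim : Tendsto (fun n => 3 * x * qPoch (q ^ 3) (-x ^ 3) n /
      (qPoch q (-x) n * qPoch q (-x) (n + 1) ^ 2)) atTop (𝓝 _) :=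
    (tendsto_const_nhds.mul (tendsto_qPoch (norm_pow_three_lt_one hq) _)).div
      ((tendsto_qPoch hq _).mul (((tendsto_qPoch hq _).comp (tendsto_add_atTop_nat 1)).pow 2))
      (by simp [hQ])
  obtain ⟨D, hD⟩ := Asymptotics.isBigO_one_nat_atTop_iff.1 (hlim.isBigO_one ℝ)
  refine ⟨D, fun n => ?_⟩
  rw [innerPotential_sub_succ (qPoch_ne_zero hq.le hx' _)]
  calc _ = ‖q ^ n‖ * ‖3 * x * qPoch (q ^ 3) (-x ^ 3) n /
        (qPoch q (-x) n * qPoch q (-x) (n + 1) ^ 2)‖ := by rw [← norm_mul]; congr 1; ring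
    _ ≤ D * ‖q‖ ^ n := by rw [norm_pow, mul_comm]; gcongr; exact hD n

end Convergence

theorem hasSum_outerCoeff_mul_innerPotential_sub_succ {q x : ℂ} (hq : ‖q‖ < 1) (hx : ‖x‖ < 1) :
    HasSum (fun p : ℕ × ℕ => outerCoeff q x p.1 *
        (innerPotential q x (p.1 + p.2) - innerPotential q x (p.1 + p.2 + 1)))
      (-(1 / 2) * (qPochInf q x * qPochInf (q ^ 3) (-x ^ 3)) /
          (qPochInf q (-x) * qPochInf (q ^ 3) (x ^ 3))
        + (1 / 3) * qPochInf (q ^ 3) (-x ^ 3) / (qPochInf q (-x)) ^ 3 + 1 / 6) := by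
  have hx' : ‖-x‖ < 1 := by rwa [norm_neg]
  have hq3 := norm_pow_three_lt_one hq
  have hQinf : qPochInf q (-x) ≠ 0 := qPochInf_ne_zero hq hx'
  have hDinf : qPochInf (q ^ 3) (x ^ 3) ≠ 0 := qPochInf_ne_zero hq3 (norm_pow_three_lt_one hx)
  obtain ⟨C, hC⟩ := exists_norm_outerCoeff_le hq hx
  obtain ⟨D, hD⟩ := exists_norm_innerPotential_sub_succ_le hq hx
  have hsum := hasSum_mul_comp_add_sub_succ (norm_nonneg q) hq hC hD (tendsto_innerPotential hq hx)
    (tendsto_outerPotential hq hx _) fun m => (outerPotential_sub_succ _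
      (qPoch_ne_zero hq.le hx' _) (qPoch_ne_zero hq3.le (norm_pow_three_lt_one hx) _)).symm
  simp only [outerPotential, qPoch_zero] at hsum
  convert hsum using 1
  · rfl
  field_simp
  ring

/- The double sum is over `m ≥ 1, n ≥ 0`, encoded by `m = p.1 + 1`, `n = p.2`. -/
theorem thmDS2_b (q : ℂ) (hq : ‖q‖ < 1) :
    ∑' p : ℕ × ℕ,
      q ^ (2 * (p.1 + 1) + p.2) * qPoch q q (p.1 + 1) * (qPoch q (-q) p.1) ^ 2 *
        qPoch (q ^ 3) (-q ^ 3) (p.1 + p.2) /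
      (qPoch (q ^ 3) (q ^ 3) (p.1 + 1) * qPoch q (-q) (p.1 + p.2) *
        (qPoch q (-q) (p.1 + 1 + p.2)) ^ 2)
    = -(1 / 2) * (qPochInf q q * qPochInf (q ^ 3) (-q ^ 3)) /
          (qPochInf q (-q) * qPochInf (q ^ 3) (q ^ 3))
      + (1 / 3) * qPochInf (q ^ 3) (-q ^ 3) / (qPochInf q (-q)) ^ 3
      + 1 / 6 := by
  refine HasSum.tsum_eq ?_
  convert hasSum_outerCoeff_mul_innerPotential_sub_succ hq hq using 2 with p
  rw [innerPotential_sub_succ (qPoch_ne_zero hq.le (by rwa [norm_neg]) _), outerCoeff,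
    add_right_comm p.1 1 p.2]
  ring
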